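/- arXiv:2012.02088 — 2 statements merged into one kernel-verified Lean document; each statement's English description precedes it below -/
import Mathlib

section
/- If the rank of M is at least 2, then for every ρ ∈ ℰ¹ the set of Demazure roots ℜ_ρ(ℰ) is infinite. -/
open scoped BigOperators

namespace RootSubgroups

/-- The natural pairing on `ℚⁿ`, identifying `N_ℚ` with the dual of `M_ℚ`. -/
def pairQ {n : ℕ} (q v : Fin n → ℚ) : ℚ := ∑ i, q i * v i

/-- A vector of `M_ℚ = ℚⁿ` is a lattice point (lies in `M = ℤⁿ`) if all its
coordinates are integers. -/
def IsLatticePt {n : ℕ} (v : Fin n → ℚ) : Prop := ∀ i, ∃ z : ℤ, v i = (z : ℚ)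

/-- The convex cone generated by a set `S ⊆ ℚⁿ`: all finite nonnegative
rational combinations of elements of `S`. -/
def coneHull {n : ℕ} (S : Set (Fin n → ℚ)) : Set (Fin n → ℚ) :=
  {x | ∃ (F : Finset (Fin n → ℚ)) (c : (Fin n → ℚ) → ℚ),
      (F : Set (Fin n → ℚ)) ⊆ S ∧ (∀ v, 0 ≤ c v) ∧ x = ∑ v ∈ F, c v • v}

/-- A finitely generated convex cone: the cone generated by a finite set. -/
def IsFGCone {n : ℕ} (C : Set (Fin n → ℚ)) : Prop :=
  ∃ S : Finset (Fin n → ℚ), C = coneHull (S : Set (Fin n → ℚ))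

/-- The dual cone `ℰ = 𝒢^∨ = {q : ⟨q, v⟩ ≥ 0 for all v ∈ 𝒢}`. -/
def dualCone {n : ℕ} (C : Set (Fin n → ℚ)) : Set (Fin n → ℚ) :=
  {q | ∀ v ∈ C, 0 ≤ pairQ q v}

/-- A face of the dual cone `ℰ = C^∨`: a subset of the form
`{q ∈ ℰ : ⟨q, v⟩ = 0}` for some `v ∈ C`. -/
def IsFaceOfDual {n : ℕ} (C F : Set (Fin n → ℚ)) : Prop :=
  ∃ v ∈ C, F = {q ∈ dualCone C | pairQ q v = 0}

/-- The ray `ℚ_{≥0}·ρ` spanned by a vector `ρ`. -/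
def raySet {n : ℕ} (ρ : Fin n → ℚ) : Set (Fin n → ℚ) :=
  {x | ∃ c : ℚ, 0 ≤ c ∧ x = c • ρ}

/-- A lattice vector is primitive if it is not a positive integer multiple
`k·q` (`k ≠ 1`) of a lattice vector `q`. -/
def IsPrimitive {n : ℕ} (ρ : Fin n → ℚ) : Prop :=
  IsLatticePt ρ ∧ ∀ (k : ℕ) (q : Fin n → ℚ), IsLatticePt q → ρ = (k : ℚ) • q → k = 1

/-- `ℰ¹`: the set of primitive lattice vectors `ρ ∈ N` such that `ℚ_{≥0}·ρ` is
a ray (one-dimensional face) of the dual cone `ℰ = C^∨`. -/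
def E1 {n : ℕ} (C : Set (Fin n → ℚ)) : Set (Fin n → ℚ) :=
  {ρ | IsPrimitive ρ ∧ IsFaceOfDual C (raySet ρ)}

/-- The Demazure roots of `ℰ = C^∨` at `ρ ∈ ℰ¹`:
`ℜ_ρ(ℰ) = {e ∈ M : ⟨ρ, e⟩ = −1 and ⟨ρ', e⟩ ≥ 0 for all ρ' ∈ ℰ¹ \ {ρ}}`. -/
def DemRootsAt {n : ℕ} (C : Set (Fin n → ℚ)) (ρ : Fin n → ℚ) : Set (Fin n → ℚ) :=
  {e | IsLatticePt e ∧ pairQ ρ e = -1 ∧ ∀ ρ' ∈ E1 C, ρ' ≠ ρ → 0 ≤ pairQ ρ' e}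

/-- The set `ℜ(ℰ)` of all Demazure roots of `ℰ = C^∨`. -/
def DemRoots {n : ℕ} (C : Set (Fin n → ℚ)) : Set (Fin n → ℚ) :=
  ⋃ ρ ∈ E1 C, DemRootsAt C ρ

/-- A face of the cone `C`: a subset of the form `{v ∈ C : ⟨q, v⟩ = 0}` for
some `q` in the dual cone of `C`. -/
def IsFaceOfCone {n : ℕ} (C F : Set (Fin n → ℚ)) : Prop :=
  ∃ q ∈ dualCone C, F = {v ∈ C | pairQ q v = 0}

/-- A facet of the cone `C`: a face whose linear span has codimension one in
the linear span of `C`. -/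
def IsFacetOfCone {n : ℕ} (C F : Set (Fin n → ℚ)) : Prop :=
  IsFaceOfCone C F ∧
    Module.finrank ℚ ↥(Submodule.span ℚ F) + 1 = Module.finrank ℚ ↥(Submodule.span ℚ C)

end RootSubgroups

namespace RootSubgroups

section Aux

variable {n : ℕ}

lemma pairQ_add_right (q a b : Fin n → ℚ) : pairQ q (a + b) = pairQ q a + pairQ q b := by
  simp [pairQ, mul_add, Finset.sum_add_distrib]

lemma pairQ_smul_right (q : Fin n → ℚ) (c : ℚ) (v : Fin n → ℚ) :
    pairQ q (c • v) = c * pairQ q v := by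
  simp only [pairQ, Pi.smul_apply, smul_eq_mul, Finset.mul_sum]
  exact Finset.sum_congr rfl fun i _ => by ring

lemma pairQ_zero_right (q : Fin n → ℚ) : pairQ q 0 = 0 := by simp [pairQ]

lemma pairQ_neg_right (q a : Fin n → ℚ) : pairQ q (-a) = -pairQ q a := by
  simp [pairQ, Finset.sum_neg_distrib]

lemma pairQ_sum_right (q : Fin n → ℚ) {ι : Type*} (F : Finset ι) (f : ι → Fin n → ℚ) :
    pairQ q (∑ v ∈ F, f v) = ∑ v ∈ F, pairQ q (f v) := by
  classical
  induction F using Finset.induction_on with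
  | empty => simp [pairQ]
  | insert _ _ h ih =>
    rw [Finset.sum_insert h, pairQ_add_right, ih, Finset.sum_insert h]

lemma IsLatticePt.add {a b : Fin n → ℚ} (ha : IsLatticePt a) (hb : IsLatticePt b) :
    IsLatticePt (a + b) := by
  intro i
  obtain ⟨x, hx⟩ := ha i
  obtain ⟨y, hy⟩ := hb i
  exact ⟨x + y, by simp [hx, hy]⟩

lemma IsLatticePt.neg {a : Fin n → ℚ} (ha : IsLatticePt a) : IsLatticePt (-a) := by
  intro i
  obtain ⟨x, hx⟩ := ha i
  exact ⟨-x, by simp [hx]⟩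

lemma IsLatticePt.intSmul {a : Fin n → ℚ} (ha : IsLatticePt a) (z : ℤ) :
    IsLatticePt ((z : ℚ) • a) := by
  intro i
  obtain ⟨x, hx⟩ := ha i
  exact ⟨z * x, by simp [hx]⟩

lemma IsLatticePt.zero : IsLatticePt (0 : Fin n → ℚ) := fun i => ⟨0, by simp⟩

lemma pairQ_int {q v : Fin n → ℚ} (hq : IsLatticePt q) (hv : IsLatticePt v) :
    ∃ z : ℤ, pairQ q v = (z : ℚ) := by
  choose zq hzq using hq
  choose zv hzv using hv
  refine ⟨∑ i, zq i * zv i, ?_⟩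
  simp only [pairQ]
  push_cast
  exact Finset.sum_congr rfl fun i _ => by rw [hzq i, hzv i]

lemma mem_coneHull_self {S : Set (Fin n → ℚ)} {s : Fin n → ℚ} (hs : s ∈ S) :
    s ∈ coneHull S := by
  classical
  refine ⟨{s}, fun v => if v = s then 1 else 0, by simpa using hs, ?_, by simp⟩
  intro v
  dsimp only
  split <;> norm_num

lemma smul_mem_coneHull {S : Set (Fin n → ℚ)} {x : Fin n → ℚ} (hx : x ∈ coneHull S)
    {c : ℚ} (hc : 0 ≤ c) : c • x ∈ coneHull S := by
  obtain ⟨F, co, hF, hco, rfl⟩ := hx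
  refine ⟨F, fun v => c * co v, hF, fun v => mul_nonneg hc (hco v), ?_⟩
  rw [Finset.smul_sum]
  refine Finset.sum_congr rfl fun v _ => ?_
  dsimp only
  rw [smul_smul]

/-- Bezout representation of the gcd of a finite family of integers. -/
lemma exists_gcd_rep {ι : Type*} (s : Finset ι) (f : ι → ℤ) :
    ∃ u : ι → ℤ, ∑ i ∈ s, f i * u i = s.gcd f := by
  classical
  induction s using Finset.induction_on with
  | empty => exact ⟨0, by simp⟩
  | @insert a s ha ih =>
    obtain ⟨u, hu⟩ := ih
    set A := Int.gcdA (f a) (s.gcd f)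
    set B := Int.gcdB (f a) (s.gcd f)
    refine ⟨fun i => if i = a then A else B * u i, ?_⟩
    rw [Finset.sum_insert ha, Finset.gcd_insert]
    dsimp only
    rw [if_pos rfl]
    have h1 : ∑ i ∈ s, f i * (if i = a then A else B * u i) = B * ∑ i ∈ s, f i * u i := by
      rw [Finset.mul_sum]
      refine Finset.sum_congr rfl fun i hi => ?_
      rw [if_neg (by rintro rfl; exact ha hi)]
      ring
    rw [h1, hu]
    have h2 := Int.gcd_eq_gcd_ab (f a) (s.gcd f)
    have h3 : (Int.gcd (f a) (s.gcd f) : ℤ) = GCDMonoid.gcd (f a) (s.gcd f) :=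
      Int.coe_gcd _ _
    rw [← h3, h2]
    ring

lemma IsPrimitive.ne_zero {ρ : Fin n → ℚ} (h : IsPrimitive ρ) : ρ ≠ 0 := by
  intro h0
  have := h.2 2 0 IsLatticePt.zero (by simp [h0])
  norm_num at this

/-- A primitive lattice vector pairs to `1` with some lattice vector. -/
lemma IsPrimitive.exists_pair_one {ρ : Fin n → ℚ} (h : IsPrimitive ρ) :
    ∃ u : Fin n → ℚ, IsLatticePt u ∧ pairQ ρ u = 1 := by
  classical
  choose z hz using h.1
  set g : ℤ := Finset.univ.gcd z with hg
  have hgnn : 0 ≤ g := by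
    have := Finset.normalize_gcd (s := (Finset.univ : Finset (Fin n))) (f := z)
    rw [← hg] at this
    rcases le_or_gt 0 g with h' | h'
    · exact h'
    · exfalso
      rw [Int.normalize_of_nonpos h'.le] at this
      omega
  have hgne : g ≠ 0 := by
    intro h0
    apply h.ne_zero
    funext i
    have : z i = 0 := (Finset.gcd_eq_zero_iff.mp h0) i (Finset.mem_univ i)
    simp [hz i, this]
  have hgpos : 0 < g := lt_of_le_of_ne hgnn (Ne.symm hgne)
  -- primitivity forces g = 1
  have hg1 : g = 1 := by
    have hdvd : ∀ i, g ∣ z i := fun i => Finset.gcd_dvd (Finset.mem_univ i)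
    have hq : IsLatticePt (fun i => ((z i / g : ℤ) : ℚ)) := fun i => ⟨z i / g, rfl⟩
    have hcast : ((g.toNat : ℕ) : ℚ) = (g : ℚ) := by
      rw [← Int.cast_natCast, Int.toNat_of_nonneg hgnn]
    have hρeq : ρ = ((g.toNat : ℕ) : ℚ) • (fun i => ((z i / g : ℤ) : ℚ)) := by
      funext i
      have h2 : ((g : ℚ)) * ((z i / g : ℤ) : ℚ) = ((z i : ℤ) : ℚ) := by
        exact_mod_cast congrArg (fun t : ℤ => (t : ℚ)) (Int.mul_ediv_cancel' (hdvd i))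
      simp only [Pi.smul_apply, smul_eq_mul, hcast]
      rw [hz i, ← h2]
    have := h.2 g.toNat _ hq hρeq
    omega
  obtain ⟨u, hu⟩ := exists_gcd_rep (Finset.univ : Finset (Fin n)) z
  refine ⟨fun i => (u i : ℚ), fun i => ⟨u i, rfl⟩, ?_⟩
  have : pairQ ρ (fun i => (u i : ℚ)) = ((∑ i, z i * u i : ℤ) : ℚ) := by
    simp only [pairQ]
    push_cast
    exact Finset.sum_congr rfl fun i _ => by rw [hz i]
  rw [this, hu, ← hg, hg1]
  norm_num

lemma self_mem_raySet (ρ : Fin n → ℚ) : ρ ∈ raySet ρ := ⟨1, by norm_num, (one_smul _ _).symm⟩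

/-- Two primitive vectors spanning the same ray are equal. -/
lemma IsPrimitive.eq_of_mem_raySet {ρ ρ' : Fin n → ℚ} (h : IsPrimitive ρ)
    (h' : IsPrimitive ρ') (hm : ρ' ∈ raySet ρ) : ρ' = ρ := by
  obtain ⟨c, hc, rfl⟩ := hm
  obtain ⟨u, hu, hu1⟩ := h.exists_pair_one
  have hpc : pairQ (c • ρ) u = c := by
    have : pairQ (c • ρ) u = c * pairQ ρ u := by
      simp only [pairQ, Pi.smul_apply, smul_eq_mul, Finset.mul_sum]
      exact Finset.sum_congr rfl fun i _ => by ring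
    rw [this, hu1, mul_one]
  obtain ⟨w, hw⟩ := pairQ_int h'.1 hu
  have hcw : c = (w : ℚ) := by rw [← hpc, hw]
  have hwnn : 0 ≤ w := by
    have : (0 : ℚ) ≤ (w : ℚ) := hcw ▸ hc
    exact_mod_cast this
  have hwne : w ≠ 0 := by
    intro h0
    apply h'.ne_zero
    rw [hcw, h0]
    simp
  have := h'.2 w.toNat ρ h.1 (by
    rw [hcw]
    congr 1
    rw [← Int.cast_natCast, Int.toNat_of_nonneg hwnn])
  have : c = 1 := by rw [hcw]; exact_mod_cast (by omega : w = 1)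
  rw [this, one_smul]

lemma mem_dualCone_of_E1 {C : Set (Fin n → ℚ)} {ρ' : Fin n → ℚ} (h : ρ' ∈ E1 C) :
    ρ' ∈ dualCone C := by
  obtain ⟨-, v, -, hface⟩ := h
  have := self_mem_raySet ρ'
  rw [hface] at this
  exact this.1

/-- The set `E1` of a finitely generated cone is finite. -/
lemma E1_finite (S : Finset (Fin n → ℚ)) : (E1 (coneHull (S : Set (Fin n → ℚ)))).Finite := by
  classical
  set C : Set (Fin n → ℚ) := coneHull (S : Set (Fin n → ℚ))
  have key : E1 C ⊆ ⋃ T ∈ (S.powerset : Finset (Finset (Fin n → ℚ))),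
      {ρ' | IsPrimitive ρ' ∧
        raySet ρ' = {q ∈ dualCone C | ∀ s ∈ T, pairQ q s = 0}} := by
    rintro ρ' ⟨hprim, v, hvC, hface⟩
    obtain ⟨F, co, hFS, hco, hveq⟩ := hvC
    set T : Finset (Fin n → ℚ) := F.filter (fun s => co s ≠ 0) with hT
    have hFS' : F ⊆ S := by exact_mod_cast hFS
    have hTmem : T ∈ S.powerset :=
      Finset.mem_powerset.mpr ((Finset.filter_subset _ F).trans hFS')
    refine Set.mem_iUnion₂.mpr ⟨T, hTmem, ?_⟩
    refine ⟨hprim, ?_⟩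
    rw [hface]
    ext q
    simp only [Set.mem_setOf_eq]
    constructor
    · rintro ⟨hqE, hqv⟩
      refine ⟨hqE, fun s hs => ?_⟩
      have hterm : ∀ w ∈ F, 0 ≤ co w * pairQ q w := fun w hw =>
        mul_nonneg (hco w) (hqE w (mem_coneHull_self (hFS hw)))
      have hsum : ∑ w ∈ F, co w * pairQ q w = 0 := by
        have : pairQ q v = ∑ w ∈ F, co w * pairQ q w := by
          rw [hveq, pairQ_sum_right]
          exact Finset.sum_congr rfl fun w _ => pairQ_smul_right q (co w) w
        rw [← this, hqv]
      have := (Finset.sum_eq_zero_iff_of_nonneg hterm).mp hsum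
      obtain ⟨hsF, hsne⟩ := Finset.mem_filter.mp hs
      have := this s hsF
      rcases mul_eq_zero.mp this with h | h
      · exact absurd h hsne
      · exact h
    · rintro ⟨hqE, hqT⟩
      refine ⟨hqE, ?_⟩
      have : pairQ q v = ∑ w ∈ F, co w * pairQ q w := by
        rw [hveq, pairQ_sum_right]
        exact Finset.sum_congr rfl fun w _ => pairQ_smul_right q (co w) w
      rw [this]
      refine Finset.sum_eq_zero fun w hw => ?_
      by_cases hcw : co w = 0
      · rw [hcw, zero_mul]
      · rw [hqT w (Finset.mem_filter.mpr ⟨hw, hcw⟩), mul_zero]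
  refine Set.Finite.subset (Set.Finite.biUnion (S.powerset : Finset _).finite_toSet
    (fun T _ => ?_)) key
  refine Set.Subsingleton.finite ?_
  rintro ρ₁ ⟨h₁p, h₁r⟩ ρ₂ ⟨h₂p, h₂r⟩
  exact h₂p.eq_of_mem_raySet h₁p (by rw [h₂r, ← h₁r]; exact self_mem_raySet ρ₁)

/-- Clearing denominators: every rational vector has a positive integer multiple
that is a lattice point. -/
lemma exists_nat_smul_lattice (v : Fin n → ℚ) :
    ∃ d : ℕ, 0 < d ∧ IsLatticePt ((d : ℚ) • v) := by
  refine ⟨∏ i, (v i).den, Finset.prod_pos (fun i _ => (v i).pos), ?_⟩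
  intro i
  obtain ⟨c, hc⟩ := Finset.dvd_prod_of_mem (fun j => (v j).den) (Finset.mem_univ i)
  refine ⟨(v i).num * c, ?_⟩
  have hden : ((v i).den : ℚ) ≠ 0 := Nat.cast_ne_zero.mpr (v i).den_nz
  have hv : (v i) = ((v i).num : ℚ) / ((v i).den : ℚ) := (Rat.num_div_den _).symm
  rw [Pi.smul_apply, smul_eq_mul, hc]
  have key : ((v i).den : ℚ) * v i = ((v i).num : ℚ) := by
    rw [mul_comm]
    exact_mod_cast Rat.mul_den_eq_num (v i)
  push_cast
  linear_combination (c : ℚ) * key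

lemma pairQ_sub_right (q a b : Fin n → ℚ) : pairQ q (a - b) = pairQ q a - pairQ q b := by
  simp [pairQ, mul_sub, Finset.sum_sub_distrib]

lemma pairQ_single (q : Fin n → ℚ) (i : Fin n) (c : ℚ) :
    pairQ q (Pi.single i c) = q i * c := by
  simp [pairQ, Pi.single_apply, mul_ite, Finset.sum_ite_eq']

lemma IsLatticePt.natSmul {a : Fin n → ℚ} (ha : IsLatticePt a) (k : ℕ) :
    IsLatticePt ((k : ℚ) • a) := by
  have := ha.intSmul (k : ℤ)
  push_cast at this
  exact this

lemma IsLatticePt.sub {a b : Fin n → ℚ} (ha : IsLatticePt a) (hb : IsLatticePt b) :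
    IsLatticePt (a - b) := by
  have := ha.add hb.neg
  rwa [← sub_eq_add_neg] at this

lemma IsLatticePt.ratSmul_of_int {a : Fin n → ℚ} (ha : IsLatticePt a) {c : ℚ}
    (hc : ∃ z : ℤ, c = (z : ℚ)) : IsLatticePt (c • a) := by
  obtain ⟨z, rfl⟩ := hc
  exact ha.intSmul z

end Aux


/-- Let `𝒢 = C ⊆ M_ℚ = ℚⁿ` be a finitely generated convex cone of full dimension
and `ℰ = C^∨` its dual cone.  If the rank `n` of `M` is at least `2`, then for
every `ρ ∈ ℰ¹` the set of Demazure roots `ℜ_ρ(ℰ)` is infinite. -/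
theorem demRootsAt_infinite {n : ℕ} (hn : 2 ≤ n) (C : Set (Fin n → ℚ))
    (hfg : IsFGCone C) (hfull : Submodule.span ℚ C = ⊤)
    (ρ : Fin n → ℚ) (hρ : ρ ∈ E1 C) :
    (DemRootsAt C ρ).Infinite := by
  classical
  obtain ⟨S, rfl⟩ := hfg
  obtain ⟨hprim, v, hvC, hface⟩ := hρ
  have hρρ := self_mem_raySet ρ
  rw [hface] at hρρ
  obtain ⟨hρE, hρv⟩ := hρρ
  -- every other extremal ray pairs strictly positively with the face witness `v`
  have hA : ∀ ρ' ∈ E1 (coneHull (S : Set (Fin n → ℚ))), ρ' ≠ ρ → 0 < pairQ ρ' v := by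
    intro ρ' hρ' hne
    have h0 : 0 ≤ pairQ ρ' v := mem_dualCone_of_E1 hρ' v hvC
    rcases h0.lt_or_eq with h | h
    · exact h
    · exfalso
      apply hne
      refine hprim.eq_of_mem_raySet hρ'.1 ?_
      rw [hface]
      exact ⟨mem_dualCone_of_E1 hρ', h.symm⟩
  -- a nonzero lattice vector `m` with ⟨ρ, m⟩ = 0 and ⟨ρ', m⟩ ≥ 1 for ρ' ≠ ρ in E1
  have hm : ∃ m : Fin n → ℚ, IsLatticePt m ∧ m ≠ 0 ∧ pairQ ρ m = 0 ∧
      ∀ ρ' ∈ E1 (coneHull (S : Set (Fin n → ℚ))), ρ' ≠ ρ → 1 ≤ pairQ ρ' m := by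
    by_cases hE : ∃ ρ'' ∈ E1 (coneHull (S : Set (Fin n → ℚ))), ρ'' ≠ ρ
    · obtain ⟨ρ'', hρ'', hne''⟩ := hE
      have hvne : v ≠ 0 := by
        intro h0
        have := hA ρ'' hρ'' hne''
        rw [h0, pairQ_zero_right] at this
        exact lt_irrefl _ this
      obtain ⟨d, hd, hdlat⟩ := exists_nat_smul_lattice v
      refine ⟨(d : ℚ) • v, hdlat, ?_, ?_, ?_⟩
      · exact smul_ne_zero (by exact_mod_cast hd.ne') hvne
      · rw [pairQ_smul_right, hρv, mul_zero]
      · intro ρ' hρ' hne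
        have hpos : 0 < pairQ ρ' ((d : ℚ) • v) := by
          rw [pairQ_smul_right]
          exact mul_pos (by exact_mod_cast hd) (hA ρ' hρ' hne)
        obtain ⟨w, hw⟩ := pairQ_int hρ'.1.1 hdlat
        rw [hw] at hpos ⊢
        have : (0 : ℤ) < w := by exact_mod_cast hpos
        exact_mod_cast this
    · push_neg at hE
      have hρne := hprim.ne_zero
      obtain ⟨i, hi⟩ : ∃ i, ρ i ≠ 0 := by
        by_contra h
        push_neg at h
        exact hρne (funext h)
      obtain ⟨j, hj⟩ : ∃ j, j ≠ i :=
        Fintype.exists_ne_of_one_lt_card (by simpa using (by omega : 1 < n)) i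
      set m₀ : Fin n → ℚ := (ρ j) • (Pi.single i 1 : Fin n → ℚ) - (ρ i) • (Pi.single j 1 : Fin n → ℚ) with hm₀
      refine ⟨m₀, ?_, ?_, ?_, ?_⟩
      · rw [hm₀]
        refine IsLatticePt.sub ?_ ?_
        · exact IsLatticePt.ratSmul_of_int (fun k => ⟨if k = i then 1 else 0, by
            simp [Pi.single_apply]⟩) (hprim.1 j)
        · exact IsLatticePt.ratSmul_of_int (fun k => ⟨if k = j then 1 else 0, by
            simp [Pi.single_apply]⟩) (hprim.1 i)
      · intro h0
        have h1 := congrFun h0 j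
        rw [hm₀] at h1
        simp only [Pi.sub_apply, Pi.smul_apply, smul_eq_mul, Pi.single_apply,
          if_neg hj, if_pos rfl, Pi.zero_apply] at h1
        simp at h1
        exact hi h1
      · rw [hm₀, pairQ_sub_right, pairQ_smul_right, pairQ_smul_right, pairQ_single, pairQ_single]
        ring
      · intro ρ' hρ' hne
        exact absurd (hE ρ' hρ') hne
  obtain ⟨m, hmlat, hmne, hmρ, hm1⟩ := hm
  obtain ⟨u, hulat, hu1⟩ := hprim.exists_pair_one
  have hfin : ((fun ρ' => pairQ ρ' (-u)) ''
      (E1 (coneHull (S : Set (Fin n → ℚ))) \ {ρ})).Finite :=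
    ((E1_finite S).diff).image _
  obtain ⟨b, hb⟩ := hfin.bddBelow
  obtain ⟨K, hK⟩ := exists_nat_ge (-b)
  set e₀ : Fin n → ℚ := -u + (K : ℚ) • m with he₀
  have hmem : ∀ k : ℕ, e₀ + (k : ℚ) • m ∈ DemRootsAt (coneHull (S : Set (Fin n → ℚ))) ρ := by
    intro k
    refine ⟨?_, ?_, ?_⟩
    · exact (hulat.neg.add (hmlat.natSmul K)).add (hmlat.natSmul k)
    · rw [pairQ_add_right, pairQ_add_right, pairQ_neg_right, pairQ_smul_right,
        pairQ_smul_right, hu1, hmρ]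
      ring
    · intro ρ' hρ' hne
      have hbd : b ≤ pairQ ρ' (-u) :=
        hb (Set.mem_image_of_mem _ ⟨hρ', by simpa using hne⟩)
      have h1 : 1 ≤ pairQ ρ' m := hm1 ρ' hρ' hne
      have hKQ : -b ≤ (K : ℚ) := hK
      rw [pairQ_add_right, pairQ_add_right, pairQ_smul_right, pairQ_smul_right]
      have t1 : (K : ℚ) * 1 ≤ (K : ℚ) * pairQ ρ' m :=
        mul_le_mul_of_nonneg_left h1 (by positivity)
      have t2 : 0 ≤ (k : ℚ) * pairQ ρ' m :=
        mul_nonneg (by positivity) (le_trans zero_le_one h1)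
      linarith
  have hinj : Function.Injective (fun k : ℕ => e₀ + (k : ℚ) • m) := by
    intro k₁ k₂ h
    obtain ⟨i, hi⟩ := Function.ne_iff.mp hmne
    simp only [Pi.zero_apply] at hi
    simp only at h
    have h2 := congrFun (add_left_cancel h) i
    simp only [Pi.smul_apply, smul_eq_mul] at h2
    have : (k₁ : ℚ) = (k₂ : ℚ) := mul_right_cancel₀ hi h2
    exact_mod_cast this
  exact Set.infinite_of_injective_forall_mem hinj hmem


end RootSubgroups
end

section
/- B = ⊕_{λ∈Γ} A_λ is a K-subalgebra of A, and the K-linear map ∂ : B → B defined by ∂(g) = ρ(λ)·f·g for g ∈ A_λ with λ ∈ Γ (extended K-linearly) is a well-defined K-derivation of B which is homogeneous of degree μ (it maps A_λ into A_{λ+μ}) and locally nilpotent: for every g ∈ A_λ with λ ∈ Γ one has ∂^k(g) = 0 whenever k > ρ(λ). -/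
open DirectSum Finset

section Aux

variable {K M A : Type*} [Field K] [AddCommGroup M] [DecidableEq M]
  [CommRing A] [Algebra K A] (ℳ : M → Submodule K A) [GradedAlgebra ℳ]
  (ρ : M →+ ℤ)

/-- The Euler-type linear operator `x ↦ ρ(λ) • x` on homogeneous pieces. -/
noncomputable def eulerLin : A →ₗ[K] A :=
  (DirectSum.toModule K M A fun lam => (ρ lam) • (ℳ lam).subtype) ∘ₗ
    (DirectSum.decomposeLinearEquiv ℳ).toLinearMap

lemma eulerLin_of_mem {lam : M} {x : A} (hx : x ∈ ℳ lam) :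
    eulerLin ℳ ρ x = ρ lam • x := by
  have : eulerLin ℳ ρ x =
      (DirectSum.toModule K M A fun lam => (ρ lam) • (ℳ lam).subtype)
        (DirectSum.of (fun i => ℳ i) lam ⟨x, hx⟩) := by
    simp [eulerLin, DirectSum.decomposeLinearEquiv_apply, DirectSum.decompose_of_mem ℳ hx]
  rw [this, ← DirectSum.lof_eq_of K, DirectSum.toModule_lof]
  rfl

/-- The Euler derivation associated to the grading and the weight `ρ`. -/
noncomputable def eulerDer : Derivation K A A where
  toLinearMap := eulerLin ℳ ρ
  map_one_eq_zero' := by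
    have h := eulerLin_of_mem ℳ ρ (SetLike.one_mem_graded ℳ)
    simpa using h
  leibniz' a b := by
    induction a using DirectSum.Decomposition.inductionOn ℳ with
    | zero => simp
    | homogeneous ha =>
      obtain ⟨a, ha⟩ := ha
      induction b using DirectSum.Decomposition.inductionOn ℳ with
      | zero => simp
      | homogeneous hb =>
        obtain ⟨b, hb⟩ := hb
        rw [eulerLin_of_mem ℳ ρ (SetLike.mul_mem_graded ha hb),
          eulerLin_of_mem ℳ ρ ha, eulerLin_of_mem ℳ ρ hb, map_add, add_smul,
          smul_eq_mul, smul_eq_mul, mul_smul_comm, mul_smul_comm, mul_comm b a,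
          add_comm]
      | add b c hb hc =>
        simp only [mul_add, map_add, smul_add, add_smul] at *
        rw [hb, hc]; abel
    | add a c ha hc =>
      simp only [add_mul, map_add, smul_add, add_smul] at *
      rw [ha, hc]; abel

/-- The derivation `x ↦ ρ(λ) • (f * x)` on homogeneous pieces. -/
noncomputable def gradD (f : A) : Derivation K A A := f • eulerDer ℳ ρ

lemma gradD_of_mem (f : A) {lam : M} {x : A} (hx : x ∈ ℳ lam) :
    gradD ℳ ρ f x = ρ lam • (f * x) := by
  show f • eulerLin ℳ ρ x = _
  rw [eulerLin_of_mem ℳ ρ hx, smul_eq_mul, mul_smul_comm]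

lemma gradD_zsmul (f : A) (c : ℤ) (x : A) :
    gradD ℳ ρ f (c • x) = c • gradD ℳ ρ f x :=
  map_zsmul (gradD ℳ ρ f).toLinearMap c x

variable {μ : M} {f : A}

lemma gradD_mem (hf : f ∈ ℳ μ) {lam : M} {x : A} (hx : x ∈ ℳ lam) :
    gradD ℳ ρ f x ∈ ℳ (lam + μ) := by
  rw [gradD_of_mem ℳ ρ f hx]
  exact zsmul_mem (add_comm μ lam ▸ SetLike.mul_mem_graded hf hx) _

lemma gradD_iterate (hf : f ∈ ℳ μ) (hμ : ρ μ = -1) {lam : M} (k : ℕ) :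
    ∀ x ∈ ℳ lam, (⇑(gradD ℳ ρ f))^[k] x =
      (∏ i ∈ Finset.range k, (ρ lam - i)) • (f ^ k * x) := by
  induction k with
  | zero => intro x hx; simp
  | succ k ih =>
    intro x hx
    have hm : f ^ k * x ∈ ℳ (k • μ + lam) :=
      SetLike.mul_mem_graded (SetLike.pow_mem_graded k hf) hx
    have hρ : ρ (k • μ + lam) = ρ lam - k := by
      rw [map_add, map_nsmul, hμ]; ring
    rw [Function.iterate_succ_apply', ih x hx, gradD_zsmul,
      gradD_of_mem ℳ ρ f hm, hρ, smul_smul, Finset.prod_range_succ,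
      ← mul_assoc, ← pow_succ']

lemma gradD_iterate_zero (hf : f ∈ ℳ μ) (hμ : ρ μ = -1) {lam : M}
    (hnn : 0 ≤ ρ lam) (k : ℕ) (hk : ρ lam < (k : ℤ)) {x : A} (hx : x ∈ ℳ lam) :
    (⇑(gradD ℳ ρ f))^[k] x = 0 := by
  rw [gradD_iterate ℳ ρ hf hμ k x hx]
  have hj : (ρ lam).toNat ∈ Finset.range k := by
    rw [Finset.mem_range]
    exact_mod_cast (Int.toNat_of_nonneg hnn).symm ▸ hk
  rw [Finset.prod_eq_zero hj (by rw [Int.toNat_of_nonneg hnn, sub_self]),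
    zero_smul]

end Aux

/-- Let `K` be a field of characteristic zero, `M` an abelian group, and `A` a
commutative `K`-algebra with an `M`-grading `ℳ`.  Let `ρ : M → ℤ` be a group
homomorphism, `μ ∈ M` with `ρ(μ) = −1`, `f ∈ A_μ`, and `Γ ⊆ M` a submonoid
with `ρ(λ) ≥ 0` for all `λ ∈ Γ` and `λ + μ ∈ Γ` whenever `λ ∈ Γ`, `ρ(λ) > 0`.
Then `B = ⊕_{λ∈Γ} A_λ` is a `K`-subalgebra of `A`, and the `K`-linear map
`∂ : B → B` with `∂(g) = ρ(λ)·f·g` for `g ∈ A_λ` (`λ ∈ Γ`) is a well-defined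
`K`-derivation of `B`, homogeneous of degree `μ` (mapping `A_λ` into
`A_{λ+μ}`) and locally nilpotent: `∂^k(g) = 0` for `g ∈ A_λ` (`λ ∈ Γ`)
whenever `k > ρ(λ)`. -/
theorem graded_multiplication_derivation
    {K M A : Type*} [Field K] [CharZero K] [AddCommGroup M] [DecidableEq M]
    [CommRing A] [Algebra K A] (ℳ : M → Submodule K A) [GradedAlgebra ℳ]
    (ρ : M →+ ℤ) (μ : M) (hμ : ρ μ = -1) (f : A) (hf : f ∈ ℳ μ)
    (Γ : AddSubmonoid M) (hΓnn : ∀ lam ∈ Γ, 0 ≤ ρ lam)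
    (hΓadd : ∀ lam ∈ Γ, 0 < ρ lam → lam + μ ∈ Γ) :
    ∃ Bsub : Subalgebra K A,
      Subalgebra.toSubmodule Bsub = (⨆ lam ∈ Γ, ℳ lam) ∧
      ∃ D : Derivation K Bsub Bsub,
        (∀ lam ∈ Γ, ∀ g : Bsub, (g : A) ∈ ℳ lam →
          ((D g : Bsub) : A) = ρ lam • (f * (g : A))) ∧
        (∀ lam ∈ Γ, ∀ g : Bsub, (g : A) ∈ ℳ lam →
          ((D g : Bsub) : A) ∈ ℳ (lam + μ)) ∧
        (∀ b : Bsub, ∃ k : ℕ, 0 < k ∧ (⇑D)^[k] b = 0) ∧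
        (∀ lam ∈ Γ, ∀ g : Bsub, (g : A) ∈ ℳ lam →
          ∀ k : ℕ, ρ lam < (k : ℤ) → (⇑D)^[k] g = 0) := by
  classical
  set S : Submodule K A := ⨆ lam ∈ Γ, ℳ lam with hS
  -- membership in S from homogeneous membership
  have hmemS : ∀ {lam : M} {x : A}, lam ∈ Γ → x ∈ ℳ lam → x ∈ S := by
    intro lam x hlam hx
    exact Submodule.mem_iSup_of_mem lam (Submodule.mem_iSup_of_mem hlam hx)
  -- induction principle for S
  have hSind : ∀ {C : A → Prop} {x : A}, x ∈ S →
      (∀ lam ∈ Γ, ∀ y ∈ ℳ lam, C y) → C 0 →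
      (∀ y z : A, C y → C z → C (y + z)) → C x := by
    intro C x hx hhom h0 hadd
    rw [hS, show (⨆ lam ∈ Γ, ℳ lam) = ⨆ p : {lam // lam ∈ Γ}, ℳ p.1 from
      iSup_subtype'] at hx
    exact Submodule.iSup_induction (motive := C) _ hx
      (fun p y hy => hhom p.1 p.2 y hy) h0 hadd
  have h1 : (1 : A) ∈ S := hmemS Γ.zero_mem (SetLike.one_mem_graded ℳ)
  have hmul : ∀ x y : A, x ∈ S → y ∈ S → x * y ∈ S := by
    intro x y hx hy
    refine hSind (C := fun a => a * y ∈ S) hx (fun lam hlam a ha => ?_) (by simpa using S.zero_mem)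
      (fun a b hA hB => by show (a + b) * y ∈ S; rw [add_mul]; exact S.add_mem hA hB)
    refine hSind (C := fun b => a * b ∈ S) hy (fun nu hnu b hb => ?_) (by simpa using S.zero_mem)
      (fun b c hA hB => by show a * (b + c) ∈ S; rw [mul_add]; exact S.add_mem hA hB)
    show a * b ∈ S
    exact hmemS (Γ.add_mem hlam hnu) (SetLike.mul_mem_graded ha hb)
  refine ⟨S.toSubalgebra h1 hmul, rfl, ?_⟩
  set Bsub := S.toSubalgebra h1 hmul with hB
  -- the derivation preserves S
  have hpres : ∀ x ∈ S, gradD ℳ ρ f x ∈ S := by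
    intro x hx
    refine hSind (C := fun y => gradD ℳ ρ f y ∈ S) hx (fun lam hlam y hy => ?_)
      (by show gradD ℳ ρ f (0 : A) ∈ S; rw [map_zero]; exact S.zero_mem)
      (fun y z hy hz => by
        show gradD ℳ ρ f (y + z) ∈ S
        rw [map_add]; exact S.add_mem hy hz)
    show gradD ℳ ρ f y ∈ S
    rcases eq_or_lt_of_le (hΓnn lam hlam) with h0 | hpos
    · rw [gradD_of_mem ℳ ρ f hy, ← h0, zero_smul]; exact S.zero_mem
    · exact hmemS (hΓadd lam hlam hpos) (gradD_mem ℳ ρ hf hy)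
  -- build the restricted derivation
  have hmem' : ∀ b : Bsub, (b : A) ∈ S := fun b => b.2
  let Dlin : Bsub →ₗ[K] Bsub :=
    { toFun := fun b => ⟨gradD ℳ ρ f (b : A), hpres _ (hmem' b)⟩
      map_add' := fun a b => Subtype.ext (by simp)
      map_smul' := fun c a => Subtype.ext (by simp) }
  have hDlin : ∀ b : Bsub, ((Dlin b : Bsub) : A) = gradD ℳ ρ f (b : A) :=
    fun b => rfl
  let D : Derivation K Bsub Bsub :=
    { toLinearMap := Dlin
      map_one_eq_zero' := Subtype.ext (by
        show gradD ℳ ρ f ((1 : Bsub) : A) = ((0 : Bsub) : A)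
        simp)
      leibniz' := fun a b => Subtype.ext (by
        show gradD ℳ ρ f ((a * b : Bsub) : A) = _
        have : ((a • Dlin b + b • Dlin a : Bsub) : A)
            = (a : A) * gradD ℳ ρ f (b : A) + (b : A) * gradD ℳ ρ f (a : A) := by
          push_cast
          rfl
        rw [this]
        push_cast
        rw [Derivation.leibniz]
        simp [smul_eq_mul]) }
  have hD : ∀ g : Bsub, ((D g : Bsub) : A) = gradD ℳ ρ f (g : A) := fun _ => rfl
  -- iterates of D agree with iterates of gradD
  have hDiter : ∀ (k : ℕ) (b : Bsub),
      (((⇑D)^[k] b : Bsub) : A) = (⇑(gradD ℳ ρ f))^[k] (b : A) := by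
    intro k
    induction k with
    | zero => intro b; rfl
    | succ k ih =>
      intro b
      rw [Function.iterate_succ_apply', Function.iterate_succ_apply', hD, ih]
  refine ⟨D, ?_, ?_, ?_, ?_⟩
  · intro lam _ g hg
    rw [hD, gradD_of_mem ℳ ρ f hg]
  · intro lam _ g hg
    rw [hD]
    exact gradD_mem ℳ ρ hf hg
  · -- local nilpotency for arbitrary elements
    intro b
    have key : ∀ x ∈ S, ∃ k : ℕ, 0 < k ∧ (⇑(gradD ℳ ρ f))^[k] x = 0 := by
      intro x hx
      refine hSind (C := fun y => ∃ k : ℕ, 0 < k ∧ (⇑(gradD ℳ ρ f))^[k] y = 0) hx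
        (fun lam hlam y hy => ?_) ⟨1, one_pos, by simp⟩ ?_
      · show ∃ k : ℕ, 0 < k ∧ (⇑(gradD ℳ ρ f))^[k] y = 0
        refine ⟨(ρ lam).toNat + 1, Nat.succ_pos _, ?_⟩
        refine gradD_iterate_zero ℳ ρ hf hμ (hΓnn lam hlam) _ ?_ hy
        push_cast
        rw [Int.toNat_of_nonneg (hΓnn lam hlam)]
        omega
      · rintro y z ⟨k₁, hk₁, hy⟩ ⟨k₂, hk₂, hz⟩
        show ∃ k : ℕ, 0 < k ∧ (⇑(gradD ℳ ρ f))^[k] (y + z) = 0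
        refine ⟨k₁ + k₂, Nat.add_pos_left hk₁ _, ?_⟩
        have hadd : ∀ (n : ℕ) (u v : A), (⇑(gradD ℳ ρ f))^[n] (u + v)
            = (⇑(gradD ℳ ρ f))^[n] u + (⇑(gradD ℳ ρ f))^[n] v := by
          intro n
          induction n with
          | zero => intro u v; rfl
          | succ n ih =>
            intro u v
            rw [Function.iterate_succ_apply, map_add, ih,
              Function.iterate_succ_apply, Function.iterate_succ_apply]
        have h0iter : ∀ n : ℕ, (⇑(gradD ℳ ρ f))^[n] (0 : A) = 0 := by
          intro n
          induction n with
          | zero => rfl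
          | succ n ih => rw [Function.iterate_succ_apply, map_zero, ih]
        have hyz1 : (⇑(gradD ℳ ρ f))^[k₁ + k₂] y = 0 := by
          rw [add_comm, Function.iterate_add_apply, hy, h0iter]
        have hyz2 : (⇑(gradD ℳ ρ f))^[k₁ + k₂] z = 0 := by
          rw [Function.iterate_add_apply, hz, h0iter]
        rw [hadd, hyz1, hyz2, add_zero]
    obtain ⟨k, hk, h⟩ := key (b : A) (hmem' b)
    exact ⟨k, hk, Subtype.ext (by rw [hDiter]; exact h)⟩
  · intro lam hlam g hg k hk
    exact Subtype.ext (by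
      rw [hDiter]
      exact gradD_iterate_zero ℳ ρ hf hμ (hΓnn lam hlam) k hk hg)
end
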